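/- arXiv:1412.5756 — 4 statements merged into one kernel-verified Lean document; each statement's English description precedes it below -/
import Mathlib

section
/- Let X and Y be compact Hausdorff spaces equipped with finite regular Borel measures μ_X and μ_Y, let f : X → Y be continuous, and let M > 0. If ∫_X (g ∘ f) dμ_X ≤ M·∫_Y g dμ_Y for every continuous function g : Y → ℝ with g ≥ 0, then μ_X(f⁻¹(A)) ≤ M·μ_Y(A) for every Borel set A ⊆ Y. (Consequently the norm of f equals the norm of the induced homomorphism Cf : C(Y) → C(X) given by composition with f.) -/
/-!
Push `μX` forward to `ν = f₊μX`; the hypothesis says `∫ g dν ≤ ∫ g d(M • μY)` for all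
nonnegative continuous `g`. An Urysohn function equal to `1` on a compact `K` and supported in
an open `U ⊇ K` then gives `ν K ≤ M μY(U)`. Inner regularity of `ν` (inherited from `μX` under
the continuous map `f`) passes to `ν U ≤ M μY(U)` for open `U`, and outer regularity of `μY`
to all sets.
-/

open MeasureTheory

namespace MeasureTheory

variable {α : Type*} [MeasurableSpace α] {μ : Measure α} {g : α → ℝ}

lemma measure_le_lintegral_ofReal_of_eqOn_one {K : Set α} (hg : Measurable g)
    (hK : Set.EqOn g 1 K) : μ K ≤ ∫⁻ x, ENNReal.ofReal (g x) ∂μ :=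
  calc μ K ≤ μ {x | 1 ≤ ENNReal.ofReal (g x)} :=
        measure_mono fun x hx => by simp [hK hx]
    _ ≤ ∫⁻ x, ENNReal.ofReal (g x) ∂μ := by
        simpa using mul_meas_ge_le_lintegral₀ hg.ennreal_ofReal.aemeasurable (μ := μ) 1

lemma lintegral_ofReal_le_measure_of_support_subset {U : Set α} (hU : MeasurableSet U)
    (hg : ∀ x, g x ≤ 1) (hgU : Function.support g ⊆ U) :
    ∫⁻ x, ENNReal.ofReal (g x) ∂μ ≤ μ U :=
  calc ∫⁻ x, ENNReal.ofReal (g x) ∂μ ≤ ∫⁻ x, U.indicator 1 x ∂μ := by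
        refine lintegral_mono fun x => ?_
        by_cases hx : x ∈ U
        · simpa [hx] using hg x
        · simp [hx, Function.notMem_support.1 fun h => hx (hgU h)]
    _ = μ U := lintegral_indicator_one hU

lemma ofReal_integral_le_lintegral_ofReal (hg : AEStronglyMeasurable g μ) (hg0 : 0 ≤ᵐ[μ] g) :
    ENNReal.ofReal (∫ x, g x ∂μ) ≤ ∫⁻ x, ENNReal.ofReal (g x) ∂μ := by
  rw [integral_eq_lintegral_of_nonneg_ae hg0 hg]
  exact ENNReal.ofReal_toReal_le

namespace Measure

variable [TopologicalSpace α] [R1Space α] [LocallyCompactSpace α] [OpensMeasurableSpace α]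
  {ν : Measure α}

lemma measure_isOpen_le_of_integral_le [ν.InnerRegular] [IsFiniteMeasureOnCompacts ν]
    (h : ∀ g : α → ℝ, Continuous g → HasCompactSupport g → (∀ x, 0 ≤ g x) →
      ∫ x, g x ∂ν ≤ ∫ x, g x ∂μ)
    {U : Set α} (hU : IsOpen U) : ν U ≤ μ U := by
  rw [hU.measurableSet.measure_eq_iSup_isCompact]
  refine iSup₂_le fun K hKU => iSup_le fun hK => ?_
  obtain ⟨g, hgK, hg_cpt, hgU, hg01⟩ :=
    exists_continuousMap_one_of_isCompact_subset_isOpen hK hU hKU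
  have hg0 : ∀ x, 0 ≤ g x := fun x => (hg01 x).1
  calc ν K ≤ ∫⁻ x, ENNReal.ofReal (g x) ∂ν :=
        measure_le_lintegral_ofReal_of_eqOn_one g.continuous.measurable hgK
    _ = ENNReal.ofReal (∫ x, g x ∂ν) :=
        (ofReal_integral_eq_lintegral_ofReal
          (g.continuous.integrable_of_hasCompactSupport hg_cpt) (.of_forall hg0)).symm
    _ ≤ ENNReal.ofReal (∫ x, g x ∂μ) := ENNReal.ofReal_le_ofReal (h g g.continuous hg_cpt hg0)
    _ ≤ ∫⁻ x, ENNReal.ofReal (g x) ∂μ :=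
        ofReal_integral_le_lintegral_ofReal g.continuous.aestronglyMeasurable (.of_forall hg0)
    _ ≤ μ U := lintegral_ofReal_le_measure_of_support_subset hU.measurableSet
        (fun x => (hg01 x).2) ((subset_tsupport g).trans hgU)

theorem le_of_integral_le_of_nonneg [ν.InnerRegular] [IsFiniteMeasureOnCompacts ν]
    [μ.OuterRegular]
    (h : ∀ g : α → ℝ, Continuous g → HasCompactSupport g → (∀ x, 0 ≤ g x) →
      ∫ x, g x ∂ν ≤ ∫ x, g x ∂μ) : ν ≤ μ := by
  refine Measure.le_iff'.2 fun A => ?_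
  rw [A.measure_eq_iInf_isOpen μ]
  exact le_iInf₂ fun U hAU => le_iInf fun hU =>
    (measure_mono hAU).trans (measure_isOpen_le_of_integral_le h hU)

end Measure

end MeasureTheory

theorem stmt_8_general {X Y : Type*}
    [TopologicalSpace X] [MeasurableSpace X] [BorelSpace X]
    [TopologicalSpace Y] [CompactSpace Y] [T2Space Y] [MeasurableSpace Y] [BorelSpace Y]
    (μX : Measure X) (μY : Measure Y)
    [IsFiniteMeasure μX] [μX.Regular] [μY.Regular]
    {f : X → Y} (hf : Continuous f)
    (M : ℝ) (hM : 0 < M)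
    (hb : ∀ g : Y → ℝ, Continuous g → (∀ y, 0 ≤ g y) →
      ∫ x, g (f x) ∂μX ≤ M * ∫ y, g y ∂μY) :
    ∀ A : Set Y, MeasurableSet A → μX (f ⁻¹' A) ≤ ENNReal.ofReal M * μY A := by
  have := Measure.InnerRegular.map_of_continuous (μ := μX) hf
  have := Measure.OuterRegular.smul μY (ENNReal.ofReal_ne_top (r := M))
  have hle : μX.map f ≤ ENNReal.ofReal M • μY := by
    refine Measure.le_of_integral_le_of_nonneg fun g hg _ hg0 => ?_
    rw [integral_map hf.aemeasurable hg.aestronglyMeasurable, integral_smul_measure,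
      ENNReal.toReal_ofReal hM.le, smul_eq_mul]
    exact hb g hg hg0
  intro A hA
  simpa [Measure.map_apply hf.measurable hA] using hle A

/-- On compact Hausdorff spaces with finite regular Borel measures: if
`∫ (g ∘ f) dμ_X ≤ M·∫ g dμ_Y` for every nonnegative continuous `g`, then
`μ_X(f⁻¹(A)) ≤ M·μ_Y(A)` for every Borel set `A` (so `|f| = |Cf|`). -/
theorem stmt_8 {X Y : Type*}
    [TopologicalSpace X] [CompactSpace X] [T2Space X] [MeasurableSpace X] [BorelSpace X]
    [TopologicalSpace Y] [CompactSpace Y] [T2Space Y] [MeasurableSpace Y] [BorelSpace Y]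
    (μX : Measure X) (μY : Measure Y)
    [IsFiniteMeasure μX] [IsFiniteMeasure μY] [μX.Regular] [μY.Regular]
    {f : X → Y} (hf : Continuous f)
    (M : ℝ) (hM : 0 < M)
    (hb : ∀ g : Y → ℝ, Continuous g → (∀ y, 0 ≤ g y) →
      ∫ x, g (f x) ∂μX ≤ M * ∫ y, g y ∂μY) :
    ∀ A : Set Y, MeasurableSet A → μX (f ⁻¹' A) ≤ ENNReal.ofReal M * μY A :=
  stmt_8_general μX μY hf M hM hb
end

section
/- Let X and Y be compact Hausdorff spaces equipped with finite regular Borel measures μ_X and μ_Y, and let ψ : C(Y,ℂ) → C(X,ℂ) be a unital *-algebra homomorphism between the algebras of continuous complex-valued functions. Then there exists a unique continuous map f : X → Y with ψ(g) = g ∘ f for all g ∈ C(Y,ℂ); moreover, if there exists M > 0 such that ∫_X ψ(g) dμ_X ≤ M·∫_Y g dμ_Y for every continuous g : Y → ℝ≥0 (viewed in C(Y,ℂ)), then μ_X(f⁻¹(A)) ≤ M·μ_Y(A) for every Borel set A ⊆ Y, i.e. f is a bounded measurable map. (This is the fullness of the functor C : BMS → CCMS^op in the categorical Gelfand duality for measure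 spaces.) -/
open MeasureTheory ComplexOrder

/-!
Points of a compact Hausdorff space are the characters of its algebra of continuous functions,
so `ψ` is composition with the map it induces between character spaces. For the bound, push
`μX` forward along `f`: the hypothesis says `∫ g ∂(f₊μX) ≤ ∫ g ∂(M • μY)` for continuous `g ≥ 0`,
and an Urysohn function between a compact `K` and an open `U ⊇ K` gives `f₊μX K ≤ M • μY U`.
Inner regularity of `μX` (images of compact sets are compact) extends this to open sets, and
outer regularity of `μY` to all Borel sets.
-/

open WeakDual.CharacterSpace in
theorem StarAlgHom.exists_continuousMap_apply_eq_comp {X Y : Type*}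
    [TopologicalSpace X] [CompactSpace X] [T2Space X]
    [TopologicalSpace Y] [CompactSpace Y] [T2Space Y]
    (ψ : C(Y, ℂ) →⋆ₐ[ℂ] C(X, ℂ)) :
    ∃ f : C(X, Y), ∀ g : C(Y, ℂ), ψ g = g.comp f := by
  refine ⟨((homeoEval Y ℂ).symm : C(_, Y)).comp
    ((compContinuousMap ψ).comp (homeoEval X ℂ : C(X, _))), fun g => ?_⟩
  ext x
  exact congr($((homeoEval Y ℂ).apply_symm_apply
    (compContinuousMap ψ (homeoEval X ℂ x))) g).symm

open WeakDual.CharacterSpace in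
theorem ContinuousMap.ext_of_forall_comp_eq {X Y : Type*} [TopologicalSpace X]
    [TopologicalSpace Y] [CompactSpace Y] [T2Space Y] {f f' : C(X, Y)}
    (h : ∀ g : C(Y, ℂ), g.comp f = g.comp f') : f = f' := by
  ext x
  refine (homeoEval Y ℂ).injective ?_
  ext g
  exact congr($(h g) x)

theorem MeasureTheory.Measure.map_le_of_forall_isCompact_subset_isOpen {X Y : Type*}
    [TopologicalSpace X] [MeasurableSpace X] [OpensMeasurableSpace X]
    [TopologicalSpace Y] [MeasurableSpace Y] [BorelSpace Y]
    {μ : Measure X} [μ.Regular] {ρ : Measure Y} [ρ.OuterRegular]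
    {f : X → Y} (hf : Continuous f)
    (h : ∀ K U, IsCompact K → IsOpen U → K ⊆ U → μ.map f K ≤ ρ U) : μ.map f ≤ ρ := by
  have h_open : ∀ U, IsOpen U → μ.map f U ≤ ρ U := by
    intro U hU
    rw [map_apply hf.measurable hU.measurableSet, (hU.preimage hf).measure_eq_iSup_isCompact]
    refine iSup₂_le fun K hKU => iSup_le fun hK => ?_
    calc μ K ≤ μ (f ⁻¹' (f '' K)) := measure_mono (Set.subset_preimage_image f K)
      _ ≤ μ.map f (f '' K) := le_map_apply hf.aemeasurable _
      _ ≤ ρ U := h _ U (hK.image hf) hU (Set.image_subset_iff.mpr hKU)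
  refine Measure.le_iff.mpr fun A _ => ?_
  rw [A.measure_eq_iInf_isOpen ρ]
  exact le_iInf₂ fun U hAU => le_iInf fun hU => (measure_mono hAU).trans (h_open U hU)

theorem MeasureTheory.measure_le_of_integral_le {Y : Type*} [TopologicalSpace Y]
    [CompactSpace Y] [NormalSpace Y] [MeasurableSpace Y] [OpensMeasurableSpace Y]
    {μ ν : Measure Y} [IsFiniteMeasure μ] [IsFiniteMeasure ν]
    (h : ∀ g : C(Y, ℝ), (∀ y, 0 ≤ g y) → ∫ y, g y ∂μ ≤ ∫ y, g y ∂ν)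
    {K U : Set Y} (hK : IsClosed K) (hU : IsOpen U) (hKU : K ⊆ U) : μ K ≤ ν U := by
  obtain ⟨g, hg_out, hg_K, hg_mem⟩ :=
    exists_continuous_zero_one_of_isClosed hU.isClosed_compl hK
      (Set.disjoint_compl_left_iff_subset.mpr hKU)
  have hK_le : K.indicator 1 ≤ ⇑g := fun y => by
    by_cases hy : y ∈ K
    · simp [hy, hg_K hy]
    · simp [hy, (hg_mem y).1]
  have hU_ge : ⇑g ≤ U.indicator 1 := fun y => by
    by_cases hy : y ∈ U
    · simp [hy, (hg_mem y).2]
    · simp [hy, hg_out hy]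
  have hg_int (m : Measure Y) [IsFiniteMeasure m] : Integrable g m :=
    g.continuous.integrable_of_hasCompactSupport (.of_compactSpace _)
  refine (ENNReal.toReal_le_toReal (measure_ne_top μ K) (measure_ne_top ν U)).mp ?_
  calc μ.real K = ∫ y, K.indicator 1 y ∂μ := (integral_indicator_one hK.measurableSet).symm
    _ ≤ ∫ y, g y ∂μ :=
        integral_mono ((integrable_const 1).indicator hK.measurableSet) (hg_int μ) hK_le
    _ ≤ ∫ y, g y ∂ν := h g fun y => (hg_mem y).1
    _ ≤ ∫ y, U.indicator 1 y ∂ν :=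
        integral_mono (hg_int ν) ((integrable_const 1).indicator hU.measurableSet) hU_ge
    _ = ν.real U := integral_indicator_one hU.measurableSet

/-- Fullness of the functor `C : BMS → CCMS^op`: every unital `*`-homomorphism
`ψ : C(Y,ℂ) → C(X,ℂ)` is composition with a unique continuous map `f : X → Y`, and if
`ψ` is bounded with constant `M` on nonnegative continuous functions (at the level of
integrals), then `f` is a bounded measurable map with the same constant. -/
theorem stmt_10 {X Y : Type*}
    [TopologicalSpace X] [CompactSpace X] [T2Space X] [MeasurableSpace X] [BorelSpace X]
    [TopologicalSpace Y] [CompactSpace Y] [T2Space Y] [MeasurableSpace Y] [BorelSpace Y]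
    (μX : Measure X) (μY : Measure Y)
    [IsFiniteMeasure μX] [IsFiniteMeasure μY] [μX.Regular] [μY.Regular]
    (ψ : C(Y, ℂ) →⋆ₐ[ℂ] C(X, ℂ)) :
    (∃! f : C(X, Y), ∀ g : C(Y, ℂ), ψ g = g.comp f) ∧
    (∀ f : C(X, Y), (∀ g : C(Y, ℂ), ψ g = g.comp f) →
      ∀ M : ℝ, 0 < M →
        (∀ g : C(Y, ℝ), (∀ y, 0 ≤ g y) →
          ∫ x, ψ (ContinuousMap.mk (fun y => (g y : ℂ))
              (Complex.continuous_ofReal.comp g.continuous)) x ∂μX ≤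
            (M : ℂ) * ∫ y, (g y : ℂ) ∂μY) →
        ∀ A : Set Y, MeasurableSet A → μX (f ⁻¹' A) ≤ ENNReal.ofReal M * μY A) := by
  refine ⟨?_, fun f hf M hM hbound A hA => ?_⟩
  · obtain ⟨f, hf⟩ := ψ.exists_continuousMap_apply_eq_comp
    exact ⟨f, hf, fun f' hf' =>
      ContinuousMap.ext_of_forall_comp_eq fun g => by rw [← hf g, ← hf' g]⟩
  have h_integral : ∀ g : C(Y, ℝ), (∀ y, 0 ≤ g y) →
      ∫ y, g y ∂μX.map f ≤ ∫ y, g y ∂(ENNReal.ofReal M • μY) := by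
    intro g hg
    have hC := hbound g hg
    simp only [hf, ContinuousMap.comp_apply, ContinuousMap.coe_mk] at hC
    rw [integral_complex_ofReal, integral_complex_ofReal, ← Complex.ofReal_mul,
      Complex.real_le_real] at hC
    rwa [integral_map f.measurable.aemeasurable g.continuous.aestronglyMeasurable,
      integral_smul_measure, ENNReal.toReal_ofReal hM.le, smul_eq_mul]
  have := μY.smul_finite (ENNReal.ofReal_ne_top (r := M))
  have := Measure.OuterRegular.smul μY (ENNReal.ofReal_ne_top (r := M))
  have hmap := Measure.map_le_of_forall_isCompact_subset_isOpen f.continuous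
    fun K U hK hU hKU => measure_le_of_integral_le h_integral hK.isClosed hU hKU
  rw [← smul_eq_mul, ← Measure.smul_apply, ← Measure.map_apply f.measurable hA]
  exact hmap A
end

section
/- Let X be a compact Hausdorff space, μ a finite regular Borel measure on X, and B ⊆ X a closed subset. Then the closure in L²(X,μ;ℂ) of the set of (a.e.-classes of) continuous functions f : X → ℂ with f(x) = 0 for all x ∈ B equals the set of elements g ∈ L²(X,μ;ℂ) with g = 0 μ-almost everywhere on B. -/
open MeasureTheory Set

set_option maxHeartbeats 1000000 in
/-- The closure in `L²(X,μ;ℂ)` of the continuous functions vanishing on a closed set `B`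
equals the set of `L²` elements vanishing `μ`-a.e. on `B`. -/
theorem stmt_13 {X : Type*} [TopologicalSpace X] [CompactSpace X] [T2Space X]
    [MeasurableSpace X] [BorelSpace X]
    (μ : Measure X) [IsFiniteMeasure μ] [μ.Regular] (B : Set X) (hB : IsClosed B) :
    closure ((fun f : C(X, ℂ) => ContinuousMap.toLp 2 μ ℂ f) ''
        {f : C(X, ℂ) | ∀ x ∈ B, f x = 0}) =
      {g : Lp ℂ 2 μ | ∀ᵐ x ∂(μ.restrict B), g x = 0} := by
  have hBm : MeasurableSet B := hB.measurableSet
  apply Set.Subset.antisymm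
  · -- closure of the image is contained in the a.e.-vanishing set
    refine closure_minimal ?_ ?_
    · rintro _ ⟨f, hf, rfl⟩
      have h1 : ∀ᵐ x ∂(μ.restrict B), (ContinuousMap.toLp 2 μ ℂ f : Lp ℂ 2 μ) x = f x :=
        ae_restrict_of_ae (ContinuousMap.coeFn_toLp μ (𝕜 := ℂ) f)
      have h2 : ∀ᵐ x ∂(μ.restrict B), f x = 0 := ae_restrict_of_forall_mem hBm hf
      filter_upwards [h1, h2] with x hx1 hx2
      rw [hx1, hx2]
    · -- the a.e.-vanishing set is closed
      refine IsSeqClosed.isClosed ?_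
      intro gs g hgs hlim
      have htendsto : Filter.Tendsto (fun n => eLpNorm (⇑g - ⇑(gs n)) 2 μ) Filter.atTop (nhds 0) := by
        have : Filter.Tendsto (fun n => dist g (gs n)) Filter.atTop (nhds 0) := by
          simpa [dist_comm] using (tendsto_iff_dist_tendsto_zero).1 hlim
        have h0 : Filter.Tendsto (fun n => ENNReal.ofReal (dist g (gs n))) Filter.atTop
            (nhds 0) := by
          simpa [Function.comp_def] using (ENNReal.continuous_ofReal.tendsto 0).comp this
        refine h0.congr fun n => ?_
        rw [Lp.dist_def, ENNReal.ofReal_toReal]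
        exact ((Lp.memLp g).sub (Lp.memLp (gs n))).eLpNorm_ne_top
      have hle : ∀ n, eLpNorm (⇑g) 2 (μ.restrict B) ≤ eLpNorm (⇑g - ⇑(gs n)) 2 μ := by
        intro n
        have hzero : ⇑(gs n) =ᵐ[μ.restrict B] 0 := hgs n
        have : ⇑g =ᵐ[μ.restrict B] ⇑g - ⇑(gs n) := by
          filter_upwards [hzero] with x hx
          simp [hx]
        calc eLpNorm (⇑g) 2 (μ.restrict B) = eLpNorm (⇑g - ⇑(gs n)) 2 (μ.restrict B) :=
              eLpNorm_congr_ae this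
          _ ≤ eLpNorm (⇑g - ⇑(gs n)) 2 μ := eLpNorm_mono_measure _ Measure.restrict_le_self
      have : eLpNorm (⇑g) 2 (μ.restrict B) ≤ 0 := ge_of_tendsto' htendsto hle
      have h0 : eLpNorm (⇑g) 2 (μ.restrict B) = 0 := le_antisymm this zero_le
      exact (eLpNorm_eq_zero_iff ((Lp.aestronglyMeasurable g).restrict) (by norm_num)).1 h0
  · -- the a.e.-vanishing set is contained in the closure
    intro g hg
    refine Metric.mem_closure_iff.2 fun ε hε => ?_
    have hε3 : (0:ℝ) < ε / 3 := by linarith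
    -- absolute continuity: small sets have small contribution
    obtain ⟨δ, hδpos, hδ⟩ := (Lp.memLp g).eLpNorm_indicator_le one_le_two (by norm_num) hε3
    -- outer regularity: open U ⊇ B with μ (U \ B) small
    have hBfin : μ B < μ B + ENNReal.ofReal δ := by
      refine ENNReal.lt_add_right (measure_ne_top μ B) ?_
      simp [ENNReal.ofReal_pos, hδpos]
    obtain ⟨U, hBU, hUopen, hUlt⟩ := B.exists_isOpen_lt_of_lt _ hBfin
    have hUB : μ (U \ B) ≤ ENNReal.ofReal δ := by
      rw [measure_diff hBU hBm.nullMeasurableSet (measure_ne_top μ B)]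
      exact tsub_le_iff_left.2 hUlt.le
    -- Urysohn function
    obtain ⟨φ, hφ0, hφ1, hφ01⟩ := exists_continuous_zero_one_of_isClosed hB
      (isClosed_compl_iff.2 hUopen) (disjoint_compl_right_iff_subset.2 hBU)
    -- approximate g by a continuous function
    obtain ⟨f, hf⟩ := (ContinuousMap.toLp_denseRange ℂ μ ℂ (ENNReal.ofNat_ne_top (n := 2))).exists_dist_lt
      g hε3
    -- the candidate
    set h : C(X, ℂ) := ⟨fun x => (φ x : ℂ) * f x,
      (Complex.continuous_ofReal.comp φ.continuous).mul f.continuous⟩ with hh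
    have hhx : ∀ x, h x = (φ x : ℂ) * f x := fun x => rfl
    have hhB : ∀ x ∈ B, h x = 0 := by
      intro x hx
      rw [hhx, show φ x = 0 from hφ0 hx]
      simp
    refine ⟨ContinuousMap.toLp 2 μ ℂ h, ⟨h, hhB, rfl⟩, ?_⟩
    -- estimates
    have hgB : ∀ᵐ x ∂μ, x ∈ B → g x = 0 := (ae_restrict_iff' hBm).1 hg
    set φg : X → ℂ := fun x => (φ x : ℂ) * g x with hφg
    have hsm1 : AEStronglyMeasurable (⇑g - φg) μ := by
      refine (Lp.aestronglyMeasurable g).sub ?_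
      exact ((Complex.continuous_ofReal.comp φ.continuous).aestronglyMeasurable).mul
        (Lp.aestronglyMeasurable g)
    have hsm2 : AEStronglyMeasurable (φg - ⇑h) μ := by
      refine AEStronglyMeasurable.sub ?_ h.continuous.aestronglyMeasurable
      exact ((Complex.continuous_ofReal.comp φ.continuous).aestronglyMeasurable).mul
        (Lp.aestronglyMeasurable g)
    -- first piece : ‖g - φ g‖ ≤ ‖indicator (U \ B) g‖ pointwise a.e.
    have e1 : eLpNorm (⇑g - φg) 2 μ ≤ ENNReal.ofReal (ε / 3) := by
      have hmono : ∀ᵐ x ∂μ, ‖(⇑g - φg) x‖ ≤ ‖(U \ B).indicator (⇑g) x‖ := by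
        filter_upwards [hgB] with x hx
        simp only [Pi.sub_apply, hφg]
        by_cases hxB : x ∈ B
        · have hns : x ∉ U \ B := fun hc => hc.2 hxB
          simp [hx hxB, Set.indicator_of_notMem hns]
        · by_cases hxU : x ∈ U
          · have hmem : x ∈ U \ B := ⟨hxU, hxB⟩
            rw [Set.indicator_of_mem hmem]
            have heq1 : g x - (φ x : ℂ) * g x = ((1 - φ x : ℝ) : ℂ) * g x := by push_cast; ring
            rw [heq1, norm_mul, Complex.norm_real, Real.norm_eq_abs]
            have h01 := hφ01 x
            have habs : |1 - φ x| ≤ 1 := by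
              rw [abs_le]; constructor <;> [linarith [h01.2]; linarith [h01.1]]
            calc |1 - φ x| * ‖g x‖ ≤ 1 * ‖g x‖ :=
                  mul_le_mul_of_nonneg_right habs (norm_nonneg _)
              _ = ‖g x‖ := one_mul _
          · have hφx : φ x = 1 := hφ1 hxU
            have hns : x ∉ U \ B := fun hc => hxU hc.1
            simp [hφx, Set.indicator_of_notMem hns]
      calc eLpNorm (⇑g - φg) 2 μ ≤ eLpNorm ((U \ B).indicator (⇑g)) 2 μ := eLpNorm_mono_ae hmono
        _ ≤ ENNReal.ofReal (ε / 3) := hδ _ (hUopen.measurableSet.diff hBm) hUB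
    -- second piece : ‖φ g - h‖ ≤ ‖g - toLp f‖ pointwise a.e.
    have e2 : eLpNorm (φg - ⇑h) 2 μ < ENNReal.ofReal (ε / 3) := by
      have hcoef : ⇑(ContinuousMap.toLp 2 μ ℂ f) =ᵐ[μ] ⇑f :=
        ContinuousMap.coeFn_toLp μ (𝕜 := ℂ) f
      have hmono : ∀ᵐ x ∂μ, ‖(φg - ⇑h) x‖ ≤ ‖(⇑g - ⇑(ContinuousMap.toLp 2 μ ℂ f)) x‖ := by
        filter_upwards [hcoef] with x hx
        simp only [Pi.sub_apply, hφg, hhx, hx]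
        rw [← mul_sub, norm_mul]
        have h01 := hφ01 x
        have hb : ‖((φ x : ℝ) : ℂ)‖ ≤ 1 := by
          rw [Complex.norm_real, Real.norm_eq_abs, abs_le]
          constructor <;> [linarith [h01.1]; linarith [h01.2]]
        calc ‖((φ x : ℝ) : ℂ)‖ * ‖g x - f x‖ ≤ 1 * ‖g x - f x‖ :=
              mul_le_mul_of_nonneg_right hb (norm_nonneg _)
          _ = ‖g x - f x‖ := one_mul _
      calc eLpNorm (φg - ⇑h) 2 μ ≤ eLpNorm (⇑g - ⇑(ContinuousMap.toLp 2 μ ℂ f)) 2 μ :=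
            eLpNorm_mono_ae hmono
        _ < ENNReal.ofReal (ε / 3) := by
            have hd : dist g (ContinuousMap.toLp 2 μ ℂ f) < ε / 3 := hf
            rw [Lp.dist_def] at hd
            calc eLpNorm (⇑g - ⇑(ContinuousMap.toLp 2 μ ℂ f)) 2 μ
                = ENNReal.ofReal ((eLpNorm (⇑g - ⇑(ContinuousMap.toLp 2 μ ℂ f)) 2 μ).toReal) :=
                  (ENNReal.ofReal_toReal (((Lp.memLp g).sub (Lp.memLp _)).eLpNorm_ne_top)).symm
              _ < ENNReal.ofReal (ε / 3) := ENNReal.ofReal_lt_ofReal_iff hε3 |>.2 hd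
    -- combine
    have hsplit : eLpNorm (⇑g - ⇑(ContinuousMap.toLp 2 μ ℂ h)) 2 μ < ENNReal.ofReal ε := by
      have hcoeh : ⇑(ContinuousMap.toLp 2 μ ℂ h) =ᵐ[μ] ⇑h :=
        ContinuousMap.coeFn_toLp μ (𝕜 := ℂ) h
      have heq : ⇑g - ⇑(ContinuousMap.toLp 2 μ ℂ h) =ᵐ[μ] (⇑g - φg) + (φg - ⇑h) := by
        filter_upwards [hcoeh] with x hx
        simp only [Pi.add_apply, Pi.sub_apply]
        rw [hx]
        ring
      calc eLpNorm (⇑g - ⇑(ContinuousMap.toLp 2 μ ℂ h)) 2 μ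
          = eLpNorm ((⇑g - φg) + (φg - ⇑h)) 2 μ := eLpNorm_congr_ae heq
        _ ≤ eLpNorm (⇑g - φg) 2 μ + eLpNorm (φg - ⇑h) 2 μ :=
            eLpNorm_add_le hsm1 hsm2 one_le_two
        _ < ENNReal.ofReal (ε / 3) + ENNReal.ofReal (ε / 3) :=
            ENNReal.add_lt_add_of_le_of_lt (ne_top_of_le_ne_top ENNReal.ofReal_ne_top e1) e1 e2
        _ ≤ ENNReal.ofReal ε := by
            rw [← ENNReal.ofReal_add hε3.le hε3.le]
            exact ENNReal.ofReal_le_ofReal (by linarith)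
    rw [Lp.dist_def]
    exact ENNReal.toReal_lt_of_lt_ofReal hsplit
end

section
/- Let X be a compact Hausdorff space, μ a finite regular Borel measure on X, and B ⊆ X a closed subset. Let K be the closure in L²(X,μ;ℂ) of the set of (classes of) continuous functions vanishing on B. Then the orthogonal projection of the constant function 1 onto the orthogonal complement K^⊥ is the a.e.-class of the indicator function of B; consequently, for every continuous g : X → ℂ, the inner product ⟨P_{K^⊥}(1), g⟩ in L²(X,μ;ℂ) equals ∫_B g dμ, the integral of g over B with respect to the conditional measure μ_B. (This identifies the quantum conditional measure (φ_μ)_I on C(X)/I with the classical conditional measure φ_{μ_B}.) -/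
open MeasureTheory ComplexInnerProductSpace

set_option synthInstance.maxHeartbeats 1000000

/-! The candidate `v = 1_B` is orthogonal to `K`, since `⟪1_B, f⟫ = ∫_B f = 0` for every
continuous `f` vanishing on `B`. The complement `1 - v = 1_{Bᶜ}` lies in `K`: by regularity
`1_{Bᶜ}` is an `L²`-limit of indicators of closed sets `F ⊆ Bᶜ`, and Urysohn's lemma
approximates each `1_F` by continuous functions supported in the open set `Bᶜ`. Hence `v` is
the projection of `1` onto `Kᗮ`. -/

open Filter Topology ENNReal symmDiff

namespace MeasureTheory

variable {X E : Type*} [MeasurableSpace X] [NormedAddCommGroup E] {μ : Measure X} {p : ℝ≥0∞}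

theorem const_sub_indicatorConstLp [IsFiniteMeasure μ] {s : Set X} (hs : MeasurableSet s)
    (c : E) :
    Lp.const p μ c - indicatorConstLp p hs (measure_ne_top μ s) c =
      indicatorConstLp p hs.compl (measure_ne_top μ sᶜ) c := by
  rw [sub_eq_iff_eq_add', ← indicatorConstLp_disjoint_union hs hs.compl _ _ disjoint_compl_right,
    ← indicatorConstLp_univ]
  congr 1
  exact (Set.union_compl_self s).symm

variable [TopologicalSpace X] [BorelSpace X]

theorem IsClosed.indicatorConstLp_mem_of_forall_isClosed_subset [Fact (1 ≤ p)] [μ.WeaklyRegular]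
    (hp : p ≠ ∞) {S : Set (Lp E p μ)} (hS : IsClosed S) {s : Set X} (hs : MeasurableSet s)
    (hμs : μ s ≠ ∞) (c : E)
    (hF : ∀ F (hF : IsClosed F) (hFs : F ⊆ s),
      indicatorConstLp p hF.measurableSet (measure_ne_top_of_subset hFs hμs) c ∈ S) :
    indicatorConstLp p hs hμs c ∈ S := by
  choose F hFs hF_closed hμF using fun n : ℕ =>
    hs.exists_isClosed_sdiff_lt hμs (ENNReal.inv_ne_zero.2 (natCast_ne_top n))
  have hlim : Tendsto (fun n => μ (F n ∆ s)) atTop (𝓝 0) := by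
    refine tendsto_of_tendsto_of_tendsto_of_le_of_le tendsto_const_nhds
      ENNReal.tendsto_inv_nat_nhds_zero (fun _ => bot_le) fun n => ?_
    rw [symmDiff_of_le (hFs n)]
    exact (hμF n).le
  exact hS.mem_of_tendsto
    (tendsto_indicatorConstLp_set (ht := fun n => (hF_closed n).measurableSet) hp hlim)
    (Eventually.of_forall fun n => hF _ (hF_closed n) (hFs n))

variable [CompactSpace X] [IsFiniteMeasure μ]

theorem indicatorConstLp_mem_closure_toLp_of_disjoint [NormalSpace X] [μ.OuterRegular]
    [NormedSpace ℝ E] [SecondCountableTopologyEither X E]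
    {𝕜 : Type*} [NormedRing 𝕜] [Module 𝕜 E] [IsBoundedSMul 𝕜 E]
    [Fact (1 ≤ p)] (hp : p ≠ ∞) {F B : Set X} (hF : IsClosed F) (hB : IsClosed B)
    (hFB : Disjoint F B) (c : E) :
    indicatorConstLp p hF.measurableSet (measure_ne_top μ F) c ∈
      closure (ContinuousMap.toLp p μ 𝕜 '' {f : C(X, E) | ∀ x ∈ B, f x = 0}) := by
  refine Metric.mem_closure_iff.2 fun ε hε => ?_
  obtain ⟨f, hf_cont, hf_approx, -, hf_supp, -⟩ :=
    exists_continuous_eLpNorm_sub_le_of_closed hp hF hB.isOpen_compl hFB.subset_compl_right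
      (measure_ne_top μ F) c (ENNReal.ofReal_pos.2 (half_pos hε)).ne'
  set g : C(X, E) := ⟨f, hf_cont⟩
  set v := indicatorConstLp p hF.measurableSet (measure_ne_top μ F) c
  have hdist : eLpNorm (⇑(ContinuousMap.toLp p μ 𝕜 g - v)) p μ ≤ ENNReal.ofReal (ε / 2) := by
    refine (eLpNorm_congr_ae ?_).trans_le hf_approx
    filter_upwards [Lp.coeFn_sub (ContinuousMap.toLp p μ 𝕜 g) v,
      ContinuousMap.coeFn_toLp (p := p) (𝕜 := 𝕜) μ g, indicatorConstLp_coeFn (p := p) (μ := μ)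
        (hs := hF.measurableSet) (hμs := measure_ne_top μ F) (c := c)] with x hsub hg hv
    rw [hsub, Pi.sub_apply, hg, hv]
    rfl
  refine ⟨ContinuousMap.toLp p μ 𝕜 g,
    ⟨g, fun x hx => Function.notMem_support.1 fun h => hf_supp h hx, rfl⟩, ?_⟩
  rw [dist_comm, dist_eq_norm, Lp.norm_def]
  exact ENNReal.toReal_lt_of_lt_ofReal
    (hdist.trans_lt ((ENNReal.ofReal_lt_ofReal_iff hε).2 (half_lt_self hε)))

end MeasureTheory

namespace MeasureTheory.L2

variable {X 𝕜 : Type*} [TopologicalSpace X] [CompactSpace X] [MeasurableSpace X] [BorelSpace X]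
  [RCLike 𝕜] {μ : Measure X} [IsFiniteMeasure μ]

theorem inner_indicatorConstLp_one_toLp {s : Set X} (hs : MeasurableSet s) (g : C(X, 𝕜)) :
    inner 𝕜 (indicatorConstLp 2 hs (measure_ne_top μ s) (1 : 𝕜)) (ContinuousMap.toLp 2 μ 𝕜 g) =
      ∫ x in s, g x ∂μ := by
  rw [inner_indicatorConstLp_one]
  exact setIntegral_congr_ae hs ((ContinuousMap.coeFn_toLp μ g).mono fun x hx _ => hx)

theorem indicatorConstLp_one_mem_orthogonal {B : Set X} (hB : MeasurableSet B)
    (K : Submodule 𝕜 (Lp 𝕜 2 μ))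
    (hK : (K : Set (Lp 𝕜 2 μ)) ⊆
      closure (ContinuousMap.toLp 2 μ 𝕜 '' {f : C(X, 𝕜) | ∀ x ∈ B, f x = 0})) :
    indicatorConstLp 2 hB (measure_ne_top μ B) (1 : 𝕜) ∈ Kᗮ := by
  set v := indicatorConstLp 2 hB (measure_ne_top μ B) (1 : 𝕜)
  have hvanishing : ContinuousMap.toLp 2 μ 𝕜 '' {f : C(X, 𝕜) | ∀ x ∈ B, f x = 0} ⊆ (𝕜 ∙ v)ᗮ := by
    rintro _ ⟨f, hf, rfl⟩
    rw [SetLike.mem_coe, Submodule.mem_orthogonal_singleton_iff_inner_left, ← inner_conj_symm,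
      inner_indicatorConstLp_one_toLp, setIntegral_congr_fun hB hf]
    simp
  rw [Submodule.mem_orthogonal]
  intro u hu
  exact Submodule.mem_orthogonal_singleton_iff_inner_left.1
    (closure_minimal hvanishing (Submodule.isClosed_orthogonal _) (hK hu))

end MeasureTheory.L2

/-- Let `K` be the closure in `L²(X,μ;ℂ)` of the continuous functions vanishing on the
closed set `B`. Then the orthogonal projection of the constant function `1` onto `Kᗮ` is
the a.e.-class of the indicator of `B`, and consequently `⟪P_{Kᗮ} 1, g⟫ = ∫_B g dμ` for
every continuous `g`. -/
theorem stmt_14 {X : Type*} [TopologicalSpace X] [CompactSpace X] [T2Space X]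
    [MeasurableSpace X] [BorelSpace X]
    (μ : Measure X) [IsFiniteMeasure μ] [μ.Regular] (B : Set X) (hB : IsClosed B)
    (K : Submodule ℂ (Lp ℂ 2 μ))
    (hK : (K : Set (Lp ℂ 2 μ)) =
      closure ((fun f : C(X, ℂ) => ContinuousMap.toLp 2 μ ℂ f) ''
        {f : C(X, ℂ) | ∀ x ∈ B, f x = 0})) :
    (((Submodule.orthogonalProjectionOnto Kᗮ
          ((memLp_const (1 : ℂ)).toLp fun _ => (1 : ℂ)) : Lp ℂ 2 μ) : X → ℂ)
        =ᵐ[μ] B.indicator fun _ => (1 : ℂ)) ∧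
    ∀ g : C(X, ℂ),
      ⟪((Submodule.orthogonalProjectionOnto Kᗮ
            ((memLp_const (1 : ℂ)).toLp fun _ => (1 : ℂ)) : Lp ℂ 2 μ)),
        ContinuousMap.toLp 2 μ ℂ g⟫ = ∫ x in B, g x ∂μ := by
  have hBm : MeasurableSet B := hB.measurableSet
  set v := indicatorConstLp 2 hBm (measure_ne_top μ B) (1 : ℂ)
  have hv_orth : v ∈ Kᗮ := L2.indicatorConstLp_one_mem_orthogonal hBm K hK.subset
  have hcompl_mem : indicatorConstLp 2 hBm.compl (measure_ne_top μ Bᶜ) (1 : ℂ) ∈ K := by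
    rw [← SetLike.mem_coe, hK]
    exact isClosed_closure.indicatorConstLp_mem_of_forall_isClosed_subset ENNReal.ofNat_ne_top _ _ _
      fun F hF hFB => indicatorConstLp_mem_closure_toLp_of_disjoint ENNReal.ofNat_ne_top hF hB
        (Set.subset_compl_iff_disjoint_right.1 hFB) 1
  have hproj : (Kᗮ.orthogonalProjectionOnto ((memLp_const (1 : ℂ)).toLp fun _ => (1 : ℂ)) :
      Lp ℂ 2 μ) = v := by
    refine Submodule.eq_starProjection_of_mem_orthogonal hv_orth (K.le_orthogonal_orthogonal ?_)
    rwa [MemLp.toLp_const, const_sub_indicatorConstLp]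
  exact ⟨hproj ▸ indicatorConstLp_coeFn,
    fun g => hproj ▸ L2.inner_indicatorConstLp_one_toLp hBm g⟩
end
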